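/- The derivative of the matrix exponential exp(Ωt) with respect to a parameter p, when Ω depends smoothly on p, admits the integral representation ∂ₚ exp(Ωt) = ∫₀ᵗ exp(Ωτ) (∂ₚΩ) exp(Ω(t−τ)) dτ. -/

import Mathlib

attribute [local instance] Matrix.linftyOpNormedRing Matrix.linftyOpNormedAlgebra

/-!
Duhamel's formula `exp(tA) - exp(tB) = ∫₀ᵗ exp(τA) (A - B) exp((t-τ)B) dτ`, i.e. the fundamental
theorem of calculus for `τ ↦ exp(τA) exp((t-τ)B)`, writes the difference quotient of
`q ↦ exp(t Ω(q))` at `p` as `∫₀ᵗ exp(τ Ω(q)) ((Ω(q) - Ω(p)) / (q - p)) exp((t-τ) Ω(p)) dτ`.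
This integral depends continuously on the pair `(Ω(q), (Ω(q) - Ω(p)) / (q - p))`, which
tends to `(Ω(p), Ω')` as `q → p`.
-/

section Duhamel

variable {𝔸 : Type*} [NormedRing 𝔸] [NormedAlgebra ℝ 𝔸] [CompleteSpace 𝔸]

open NormedSpace

theorem exp_continuous_of_normedAlgebra_real : Continuous (exp : 𝔸 → 𝔸) :=
  continuous_iff_continuousAt.2 fun x => (exp_analytic (𝕂 := ℝ) x).continuousAt

theorem hasDerivAt_exp_smul_mul_exp_sub_smul (A B : 𝔸) (t τ : ℝ) :
    HasDerivAt (fun s : ℝ => exp (s • A) * exp ((t - s) • B))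
      (exp (τ • A) * (A - B) * exp ((t - τ) • B)) τ := by
  have hA : HasDerivAt (fun s : ℝ => exp (s • A)) (exp (τ • A) * A) τ :=
    hasDerivAt_exp_smul_const A τ
  have hB : HasDerivAt (fun s : ℝ => exp ((t - s) • B))
      ((-1 : ℝ) • (exp ((t - τ) • B) * B)) τ :=
    (hasDerivAt_exp_smul_const B (t - τ)).scomp τ ((hasDerivAt_id τ).const_sub t)
  refine (hA.mul hB).congr_deriv ?_
  have hcomm : Commute B (exp ((t - τ) • B)) :=
    ((Commute.refl B).smul_right (t - τ)).exp_right
  rw [neg_one_smul, mul_neg, mul_assoc (exp (τ • A)), ← hcomm.eq]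
  noncomm_ring

theorem exp_smul_sub_exp_smul_eq_integral (A B : 𝔸) (t : ℝ) :
    exp (t • A) - exp (t • B) =
      ∫ τ in (0 : ℝ)..t, exp (τ • A) * (A - B) * exp ((t - τ) • B) := by
  have hcont : Continuous fun τ : ℝ => exp (τ • A) * (A - B) * exp ((t - τ) • B) :=
    ((exp_continuous_of_normedAlgebra_real.comp (by fun_prop)).mul continuous_const).mul
      (exp_continuous_of_normedAlgebra_real.comp (by fun_prop))
  rw [intervalIntegral.integral_eq_sub_of_hasDerivAt
    (fun τ _ => hasDerivAt_exp_smul_mul_exp_sub_smul A B t τ) (hcont.intervalIntegrable 0 t)]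
  simp

theorem slope_exp_smul_eq_integral (f : ℝ → 𝔸) (t p q : ℝ) :
    slope (fun s => exp (t • f s)) p q =
      ∫ τ in (0 : ℝ)..t, exp (τ • f q) * slope f p q * exp ((t - τ) • f p) := by
  rw [slope_def_module, slope_def_module, exp_smul_sub_exp_smul_eq_integral,
    ← intervalIntegral.integral_smul]
  refine intervalIntegral.integral_congr fun τ _ => ?_
  rw [mul_smul_comm, smul_mul_assoc]

theorem continuous_integral_exp_smul_mul_mul_exp_smul (B : 𝔸) (t : ℝ) :
    Continuous fun x : 𝔸 × 𝔸 =>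
      ∫ τ in (0 : ℝ)..t, exp (τ • x.1) * x.2 * exp ((t - τ) • B) := by
  apply intervalIntegral.continuous_parametric_intervalIntegral_of_continuous'
  exact ((exp_continuous_of_normedAlgebra_real.comp (by fun_prop)).mul (by fun_prop)).mul
    (exp_continuous_of_normedAlgebra_real.comp (by fun_prop))

end Duhamel

theorem deriv_exp_param_integral_general (n : ℕ) (Ω : ℝ → Matrix (Fin n) (Fin n) ℝ)
    (Ω' : Matrix (Fin n) (Fin n) ℝ) (p t : ℝ)
    (hΩ : HasDerivAt Ω Ω' p) :
    HasDerivAt (fun q : ℝ => NormedSpace.exp (t • Ω q))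
      (∫ τ in (0:ℝ)..t,
        NormedSpace.exp (τ • Ω p) * Ω' * NormedSpace.exp ((t - τ) • Ω p)) p := by
  refine hasDerivAt_iff_tendsto_slope.mpr ?_
  have hpair : Filter.Tendsto (fun q => (Ω q, slope Ω p q)) (nhdsWithin p {p}ᶜ)
      (nhds (Ω p, Ω')) :=
    hΩ.continuousAt.continuousWithinAt.tendsto.prodMk_nhds
      (hasDerivAt_iff_tendsto_slope.mp hΩ)
  have hlim := ((continuous_integral_exp_smul_mul_mul_exp_smul (Ω p) t).tendsto _).comp hpair
  exact hlim.congr fun q => (slope_exp_smul_eq_integral Ω t p q).symm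

/-- The derivative of `p ↦ exp(t Ω(p))` with respect to the parameter `p`, when `Ω`
depends differentiably on `p`, is `∫₀ᵗ exp(τΩ) (∂ₚΩ) exp((t−τ)Ω) dτ`. -/
theorem deriv_exp_param_integral (n : ℕ) (Ω : ℝ → Matrix (Fin n) (Fin n) ℝ)
    (Ω' : Matrix (Fin n) (Fin n) ℝ) (p t : ℝ) (ht : 0 ≤ t)
    (hΩ : HasDerivAt Ω Ω' p) :
    HasDerivAt (fun q : ℝ => NormedSpace.exp (t • Ω q))
      (∫ τ in (0:ℝ)..t,
        NormedSpace.exp (τ • Ω p) * Ω' * NormedSpace.exp ((t - τ) • Ω p)) p :=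
  deriv_exp_param_integral_general n Ω Ω' p t hΩ
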